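/- arXiv:2005.04378 — 5 statements merged into one kernel-verified Lean document; each statement's English description precedes it below -/
import Mathlib

section
/- For all real x, y, t and nonnegative integers i, j, the double integral ∫₀^∞∫₀^∞ x^{2i+1} y^{2j+1} H(t, x+y) dx dy equals ((2i+1)!(2j+1)!/(2i+2j+3)!) · F_{2i+2j+3}(t), where F_{2k+1}(t) = ∫₀^∞ x^{2k+1} H(x,t) dx. -/
/-!
Under the shear `(x, y) ↦ (x, s) = (x, x + y)`, which preserves Lebesgue measure, the open
quadrant becomes the wedge `0 < x < s`. Integrating first in `x` leaves the Beta integral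
`∫₀ˢ xᵃ (s - x)ᵇ dx = a! b! / (a + b + 1)! · sᵃ⁺ᵇ⁺¹`, so the double integral collapses to a single
moment of `H(t, ·)`; the symmetry `H(x, t) = H(t, x)` finishes. Fubini applies because
`|H(t, s)| ≲ exp(-s / 4)`.
-/

open Real MeasureTheory

/-- The kernel `H(x,y) = (1/(4π))(1/cosh((x−y)/4) − 1/cosh((x+y)/4))`. -/
noncomputable def Hker (x y : ℝ) : ℝ :=
  (1 / (4 * Real.pi)) *
    (1 / Real.cosh ((x - y) / 4) - 1 / Real.cosh ((x + y) / 4))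

open Set
open scoped Nat

theorem integral_Ioo_pow_mul_sub_pow (a b : ℕ) {s : ℝ} (hs : 0 < s) :
    ∫ x in Ioo 0 s, x ^ a * (s - x) ^ b =
      (a ! * b ! / (a + b + 1)! : ℝ) * s ^ (a + b + 1) := by
  have hβ := Complex.betaIntegral_scaled (a + 1) (b + 1) hs
  rw [Complex.betaIntegral_eq_Gamma_mul_div _ _ (by simp; positivity) (by simp; positivity),
    show (a + 1 : ℂ) + (b + 1) = ((a + b + 1 : ℕ) : ℂ) + 1 by push_cast; ring,
    Complex.Gamma_nat_eq_factorial, Complex.Gamma_nat_eq_factorial,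
    Complex.Gamma_nat_eq_factorial] at hβ
  simp only [add_sub_cancel_right, Complex.cpow_natCast] at hβ
  rw [← integral_Ioc_eq_integral_Ioo, ← intervalIntegral.integral_of_le hs.le]
  apply Complex.ofReal_injective
  rw [← intervalIntegral.integral_ofReal]
  push_cast
  convert hβ using 1
  ring

def wedge : Set (ℝ × ℝ) := {p | p.1 ∈ Ioo 0 p.2}

theorem measurableSet_wedge : MeasurableSet wedge :=
  (measurableSet_lt measurable_const measurable_fst).inter
    (measurableSet_lt measurable_fst measurable_snd)

theorem preimage_shear_wedge :
    (fun p : ℝ × ℝ => (p.1, p.1 + p.2)) ⁻¹' wedge = Ioi 0 ×ˢ Ioi 0 := by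
  ext ⟨x, y⟩
  simp [wedge]

theorem setIntegral_quadrant_comp_shear (g : ℝ × ℝ → ℝ) :
    ∫ p in Ioi 0 ×ˢ Ioi 0, g (p.1, p.1 + p.2) = ∫ p in wedge, g p := by
  rw [← preimage_shear_wedge]
  exact (measurePreserving_prod_add volume volume).setIntegral_preimage_emb
    (MeasurableEquiv.shearAddRight ℝ).measurableEmbedding g wedge

theorem integrableOn_wedge_iff {g : ℝ × ℝ → ℝ} :
    IntegrableOn g wedge ↔ IntegrableOn (fun p => g (p.1, p.1 + p.2)) (Ioi 0 ×ˢ Ioi 0) := by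
  rw [← preimage_shear_wedge]
  exact ((measurePreserving_prod_add volume volume).integrableOn_comp_preimage
    (MeasurableEquiv.shearAddRight ℝ).measurableEmbedding).symm

theorem setIntegral_wedge {g : ℝ × ℝ → ℝ} (hg : IntegrableOn g wedge) :
    ∫ p in wedge, g p = ∫ s in Ioi 0, ∫ x in Ioo 0 s, g (x, s) := by
  have slice (s : ℝ) : ∫ x, wedge.indicator g (x, s) = ∫ x in Ioo 0 s, g (x, s) :=
    integral_indicator measurableSet_Ioo
  rw [← integral_indicator measurableSet_wedge, Measure.volume_eq_prod,
    integral_prod_symm _ ((integrable_indicator_iff measurableSet_wedge).2 hg), funext slice]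
  refine (setIntegral_eq_integral_of_forall_compl_eq_zero fun s hs => ?_).symm
  rw [Ioo_eq_empty (by simpa using hs), Measure.restrict_empty, integral_zero_measure]

theorem integral_Ioi_Ioi_pow_mul_pow_mul_comp_add (a b : ℕ) {f : ℝ → ℝ}
    (hf : IntegrableOn (fun p : ℝ × ℝ => p.1 ^ a * p.2 ^ b * f (p.1 + p.2)) (Ioi 0 ×ˢ Ioi 0)) :
    ∫ x in Ioi 0, ∫ y in Ioi 0, x ^ a * y ^ b * f (x + y) =
      (a ! * b ! / (a + b + 1)! : ℝ) * ∫ s in Ioi 0, s ^ (a + b + 1) * f s := by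
  set g : ℝ × ℝ → ℝ := fun p => p.1 ^ a * (p.2 - p.1) ^ b * f p.2
  have hg : (fun p : ℝ × ℝ => g (p.1, p.1 + p.2)) =
      fun p => p.1 ^ a * p.2 ^ b * f (p.1 + p.2) := by
    simp only [g, add_sub_cancel_left]
  rw [← setIntegral_prod _ hf, ← Measure.volume_eq_prod, ← hg, setIntegral_quadrant_comp_shear,
    setIntegral_wedge (integrableOn_wedge_iff.2 (hg ▸ hf)), ← integral_const_mul]
  refine setIntegral_congr_fun measurableSet_Ioi fun s (hs : 0 < s) => ?_
  rw [integral_mul_const (f s), integral_Ioo_pow_mul_sub_pow a b hs]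
  ring

theorem integrableOn_pow_mul_exp_neg_mul (n : ℕ) {c : ℝ} (hc : 0 < c) :
    IntegrableOn (fun x : ℝ => x ^ n * exp (-c * x)) (Ioi 0) := by
  refine (integrableOn_rpow_mul_exp_neg_mul_rpow (p := 1) (s := n)
    (neg_one_lt_zero.trans_le n.cast_nonneg) one_pos hc).congr_fun (fun x _ => ?_)
    measurableSet_Ioi
  simp only [rpow_natCast, rpow_one]

theorem integrableOn_quadrant_pow_mul_pow_mul_comp_add (a b : ℕ) {f : ℝ → ℝ}
    (hf : Continuous f) {C c : ℝ} (hc : 0 < c) (hf_le : ∀ s, 0 < s → |f s| ≤ C * exp (-c * s)) :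
    IntegrableOn (fun p : ℝ × ℝ => p.1 ^ a * p.2 ^ b * f (p.1 + p.2)) (Ioi 0 ×ˢ Ioi 0) := by
  have hdom := ((integrableOn_pow_mul_exp_neg_mul a hc).const_mul C).mul_prod
    (integrableOn_pow_mul_exp_neg_mul b hc)
  rw [Measure.prod_restrict] at hdom
  refine hdom.mono' (by fun_prop) ?_
  filter_upwards [ae_restrict_mem (measurableSet_Ioi.prod measurableSet_Ioi)]
    with ⟨x, y⟩ ⟨(hx : 0 < x), (hy : 0 < y)⟩
  calc ‖x ^ a * y ^ b * f (x + y)‖ = x ^ a * y ^ b * |f (x + y)| := by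
        rw [norm_mul, norm_mul, norm_pow, norm_pow, Real.norm_of_nonneg hx.le,
          Real.norm_of_nonneg hy.le, Real.norm_eq_abs]
    _ ≤ x ^ a * y ^ b * (C * exp (-c * (x + y))) := by gcongr; exact hf_le _ (by positivity)
    _ = C * (x ^ a * exp (-c * x)) * (y ^ b * exp (-c * y)) := by
        rw [mul_add, exp_add]; ring

theorem one_div_cosh_le {u c : ℝ} (h : c ≤ |u|) : 1 / cosh u ≤ 2 * exp (-c) := by
  have hcosh : exp |u| / 2 ≤ cosh u := by
    rw [← cosh_abs, cosh_eq]
    linarith [exp_pos (-|u|)]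
  calc 1 / cosh u ≤ 1 / (exp |u| / 2) := by gcongr
    _ = 2 * exp (-|u|) := by rw [exp_neg]; field_simp
    _ ≤ 2 * exp (-c) := by gcongr

theorem Hker_comm (x y : ℝ) : Hker x y = Hker y x := by
  rw [Hker, Hker, ← cosh_neg ((x - y) / 4), ← neg_div, neg_sub, add_comm]

theorem abs_Hker_le (t s : ℝ) : |Hker t s| ≤ exp ((|t| - s) / 4) / (2 * π) := by
  have key {v : ℝ} (hv : s - |t| ≤ |v|) : 1 / cosh (v / 4) ≤ 2 * exp ((|t| - s) / 4) := by
    refine (one_div_cosh_le (c := (s - |t|) / 4) ?_).trans_eq (by ring_nf)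
    rw [abs_div, abs_of_pos (four_pos : (0 : ℝ) < 4)]
    linarith
  have h₁ := key (v := t - s) (by cases abs_cases t <;> cases abs_cases (t - s) <;> linarith)
  have h₂ := key (v := t + s) (by cases abs_cases t <;> cases abs_cases (t + s) <;> linarith)
  have h₁' : 0 ≤ 1 / cosh ((t - s) / 4) := by positivity
  have h₂' : 0 ≤ 1 / cosh ((t + s) / 4) := by positivity
  rw [Hker, abs_mul, abs_of_pos (by positivity)]
  calc 1 / (4 * π) * |1 / cosh ((t - s) / 4) - 1 / cosh ((t + s) / 4)|
      ≤ 1 / (4 * π) * (2 * exp ((|t| - s) / 4)) := by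
        gcongr
        exact abs_sub_le_iff.2 ⟨by linarith, by linarith⟩
    _ = exp ((|t| - s) / 4) / (2 * π) := by field_simp; ring

theorem continuous_Hker (t : ℝ) : Continuous (Hker t) := by
  unfold Hker
  fun_prop (disch := exact fun _ => (cosh_pos _).ne')

/-- `∫₀^∞∫₀^∞ x^{2i+1} y^{2j+1} H(t, x+y) dx dy
  = ((2i+1)!(2j+1)!/(2i+2j+3)!) · F_{2i+2j+3}(t)`,
where `F_{2k+1}(t) = ∫₀^∞ x^{2k+1} H(x,t) dx`. -/
theorem stmt1 (i j : ℕ) (t : ℝ) :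
    (∫ x in Set.Ioi (0 : ℝ), ∫ y in Set.Ioi (0 : ℝ),
        x ^ (2 * i + 1) * y ^ (2 * j + 1) * Hker t (x + y)) =
      ((Nat.factorial (2 * i + 1) : ℝ) * (Nat.factorial (2 * j + 1) : ℝ) /
          (Nat.factorial (2 * i + 2 * j + 3) : ℝ)) *
        ∫ x in Set.Ioi (0 : ℝ), x ^ (2 * i + 2 * j + 3) * Hker x t := by
  have hdecay (s : ℝ) (_ : 0 < s) :
      |Hker t s| ≤ exp (|t| / 4) / (2 * π) * exp (-(1 / 4) * s) := by
    refine (abs_Hker_le t s).trans_eq ?_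
    rw [div_mul_eq_mul_div, ← exp_add]
    ring_nf
  have hint := integrableOn_quadrant_pow_mul_pow_mul_comp_add (2 * i + 1) (2 * j + 1)
    (continuous_Hker t) (by norm_num) hdecay
  rw [integral_Ioi_Ioi_pow_mul_pow_mul_comp_add _ _ hint,
    show 2 * i + 2 * j + 3 = 2 * i + 1 + (2 * j + 1) + 1 by ring]
  simp_rw [Hker_comm _ t]
end

section
/- For all real x, y, z, the identity D^M(x,y,z) = R^M(x,y,z) + R^M(x,z,y) − x holds, where R^M(x,y,z) = x − log((cosh(y/2)+cosh((x+z)/2))/(cosh(y/2)+cosh((x−z)/2))) and D^M(x,y,z) = 2 log((e^{x/2}+e^{(y+z)/2})/(e^{−x/2}+e^{(y+z)/2})). -/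
/-- Mirzakhani's kernel
`R^M(x,y,z) = x − log((cosh(y/2)+cosh((x+z)/2))/(cosh(y/2)+cosh((x−z)/2)))`. -/
noncomputable def RM (x y z : ℝ) : ℝ :=
  x - Real.log ((Real.cosh (y / 2) + Real.cosh ((x + z) / 2)) /
      (Real.cosh (y / 2) + Real.cosh ((x - z) / 2)))

/-- Mirzakhani's kernel
`D^M(x,y,z) = 2 log((e^{x/2}+e^{(y+z)/2})/(e^{−x/2}+e^{(y+z)/2}))`. -/
noncomputable def DM (x y z : ℝ) : ℝ :=
  2 * Real.log ((Real.exp (x / 2) + Real.exp ((y + z) / 2)) /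
      (Real.exp (-x / 2) + Real.exp ((y + z) / 2)))

/-- The identity `D^M(x,y,z) = R^M(x,y,z) + R^M(x,z,y) − x`. -/
theorem stmt4 (x y z : ℝ) : DM x y z = RM x y z + RM x z y - x := by
  unfold DM RM
  set P := Real.exp (x / 2) + Real.exp ((y + z) / 2) with hP
  set Q := Real.exp (-x / 2) + Real.exp ((y + z) / 2) with hQ
  set A := Real.cosh (y / 2) + Real.cosh ((x + z) / 2) with hA
  set B := Real.cosh (y / 2) + Real.cosh ((x - z) / 2) with hB
  set C := Real.cosh (z / 2) + Real.cosh ((x + y) / 2) with hC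
  set D := Real.cosh (z / 2) + Real.cosh ((x - y) / 2) with hD
  have hPpos : 0 < P := by positivity
  have hQpos : 0 < Q := by positivity
  have hApos : 0 < A := by rw [hA]; have := Real.cosh_pos (y/2); have := Real.cosh_pos ((x+z)/2); linarith
  have hBpos : 0 < B := by rw [hB]; have := Real.cosh_pos (y/2); have := Real.cosh_pos ((x-z)/2); linarith
  have hCpos : 0 < C := by rw [hC]; have := Real.cosh_pos (z/2); have := Real.cosh_pos ((x+y)/2); linarith
  have hDpos : 0 < D := by rw [hD]; have := Real.cosh_pos (z/2); have := Real.cosh_pos ((x-y)/2); linarith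
  have key : P ^ 2 * A * C = Real.exp x * Q ^ 2 * B * D := by
    have e1 : Real.exp ((y + z) / 2) = Real.exp (y/2) * Real.exp (z/2) := by
      rw [← Real.exp_add]; ring_nf
    have e2 : Real.exp (-x / 2) = (Real.exp (x/2))⁻¹ := by
      rw [← Real.exp_neg]; ring_nf
    have e3 : Real.exp x = Real.exp (x/2) * Real.exp (x/2) := by
      rw [← Real.exp_add]; ring_nf
    have ha := Real.exp_ne_zero (x/2)
    have hb := Real.exp_ne_zero (y/2)
    have hc := Real.exp_ne_zero (z/2)
    simp only [hP, hQ, hA, hB, hC, hD, Real.cosh_eq, e1, e2, e3]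
    rw [show -(y/2) = -(y/2) from rfl]
    rw [show ((x:ℝ)+z)/2 = x/2 + z/2 by ring, show ((x:ℝ)-z)/2 = x/2 + -(z/2) by ring,
        show ((x:ℝ)+y)/2 = x/2 + y/2 by ring, show ((x:ℝ)-y)/2 = x/2 + -(y/2) by ring,
        show -((x:ℝ)/2 + z/2) = -(x/2) + -(z/2) by ring,
        show -((x:ℝ)/2 + -(z/2)) = -(x/2) + z/2 by ring,
        show -((x:ℝ)/2 + y/2) = -(x/2) + -(y/2) by ring,
        show -((x:ℝ)/2 + -(y/2)) = -(x/2) + y/2 by ring]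
    simp only [Real.exp_add, Real.exp_neg]
    field_simp
    ring
  have h1 : Real.log (P ^ 2 * A * C) = Real.log (Real.exp x * Q ^ 2 * B * D) := by rw [key]
  rw [Real.log_mul (by positivity) hCpos.ne', Real.log_mul (by positivity) hApos.ne',
      Real.log_mul (by positivity) hDpos.ne', Real.log_mul (by positivity) hBpos.ne',
      Real.log_mul (Real.exp_ne_zero x) (by positivity), Real.log_pow, Real.log_pow,
      Real.log_exp] at h1
  rw [Real.log_div hPpos.ne' hQpos.ne', Real.log_div hApos.ne' hBpos.ne',
      Real.log_div hCpos.ne' hDpos.ne']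
  push_cast at h1
  linarith
end

section
/- ∫₀^∞ ∫₀^∞ y z D(x,y,z) dy dz = x³/6 + 2π² x for all real x, where D(x,y,z) = H(x,y+z). -/
open Real MeasureTheory

/-- The kernel `D(x,y,z) = H(x, y+z)`. -/
noncomputable def Dker (x y z : ℝ) : ℝ := Hker x (y + z)

/-!
Substituting `u = y + z`, the segment `{y + z = u}` of the quadrant carries the weight
`∫₀ᵘ y (u - y) dy = u³/6`, so the double integral is `(1/6) ∫₀^∞ u³ H(x,u) du`.
With `g u = u³ / cosh ((x - u)/4)` one has `u³ H(x,u) = (g u + g (-u)) / (4π)`, so the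
half-line integral is `(1/(4π)) ∫_ℝ g`. The shift `u = x + 4t` reduces `∫_ℝ g` to the moments
`∫ tⁿ / cosh t`, `n ≤ 3`: the odd ones vanish, `∫ 1 / cosh t = π` (antiderivative
`2 arctan (exp t)`), and `∫ t² / cosh t = π³/4` is the Mellin transform
`∫₀^∞ t^(s-1) / cosh t = 2 Γ(s) β(s)` at `s = 3`, with `β(3) = π³/32`.
-/

open Set Filter Asymptotics

lemma inv_cosh_le_two_mul_exp_neg (t : ℝ) : (cosh t)⁻¹ ≤ 2 * exp (-t) := by
  rw [inv_le_iff_one_le_mul₀' (cosh_pos t), cosh_eq, exp_neg]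
  have := exp_pos t
  field_simp
  nlinarith [exp_pos (-t), mul_inv_cancel₀ this.ne', inv_pos.2 this]

lemma integrable_pow_div_cosh (n : ℕ) : Integrable fun t : ℝ => t ^ n / cosh t := by
  have hcont : Continuous fun t : ℝ => t ^ n / cosh t :=
    (continuous_pow n).div continuous_cosh fun t => (cosh_pos t).ne'
  refine hcont.locallyIntegrable.integrable_of_isBigO_atTop_of_norm_isNegInvariant
    (g := fun t => t ^ n * exp (-t)) (.of_forall fun t => by simp) ?_ ?_
  · refine IsBigO.of_bound 2 (.of_forall fun t => ?_)
    rw [norm_div, norm_mul, norm_of_nonneg (cosh_pos t).le, norm_of_nonneg (exp_pos _).le,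
      div_eq_mul_inv, ← mul_assoc, mul_comm 2, mul_assoc]
    exact mul_le_mul_of_nonneg_left (inv_cosh_le_two_mul_exp_neg t) (norm_nonneg _)
  · refine ⟨Ioi 0, Ioi_mem_atTop 0, ?_⟩
    simpa [rpow_natCast, mul_comm] using GammaIntegral_convergent (s := n + 1) (by positivity)

lemma hasDerivAt_two_mul_arctan_exp (t : ℝ) :
    HasDerivAt (fun s => 2 * arctan (exp s)) (1 / cosh t) t := by
  have h := ((hasDerivAt_arctan _).comp t (hasDerivAt_exp t)).const_mul 2
  refine h.congr_deriv ?_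
  rw [cosh_eq, exp_neg]
  field_simp
  ring

lemma integral_one_div_cosh : ∫ t : ℝ, 1 / cosh t = π := by
  have hbot : Tendsto (fun s => 2 * arctan (exp s)) atBot (nhds (2 * arctan 0)) :=
    ((continuous_arctan.tendsto 0).comp tendsto_exp_atBot).const_mul 2
  have htop : Tendsto (fun s => 2 * arctan (exp s)) atTop (nhds (2 * (π / 2))) :=
    ((tendsto_arctan_atTop.mono_right nhdsWithin_le_nhds).comp tendsto_exp_atTop).const_mul 2
  rw [integral_of_hasDerivAt_of_tendsto hasDerivAt_two_mul_arctan_exp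
    (by simpa using integrable_pow_div_cosh 0) hbot htop, arctan_zero]
  ring

lemma integral_pow_div_cosh_of_odd {n : ℕ} (hn : Odd n) : ∫ t : ℝ, t ^ n / cosh t = 0 := by
  have h := integral_neg_eq_self (fun t : ℝ => t ^ n / cosh t) volume
  simp only [cosh_neg, hn.neg_pow, neg_div, integral_neg] at h
  linarith

lemma hasSum_inv_cosh {t : ℝ} (ht : 0 < t) :
    HasSum (fun k : ℕ => 2 * (-1) ^ k * exp (-(2 * k + 1) * t)) (cosh t)⁻¹ := by
  have hq : ‖-exp (-(2 * t))‖ < 1 := by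
    rw [norm_neg, norm_of_nonneg (exp_pos _).le, exp_lt_one_iff]
    linarith
  have h := (hasSum_geometric_of_norm_lt_one hq).mul_left (2 * exp (-t))
  have hterm (k : ℕ) : 2 * exp (-t) * (-exp (-(2 * t))) ^ k
      = 2 * (-1) ^ k * exp (-(2 * k + 1) * t) := by
    rw [neg_pow, ← exp_nat_mul, mul_left_comm, mul_assoc, ← exp_add]
    ring_nf
  have hsum : 2 * exp (-t) * (1 - -exp (-(2 * t)))⁻¹ = (cosh t)⁻¹ := by
    rw [cosh_eq, sub_neg_eq_add, show -(2 * t) = -t + -t by ring, exp_add, exp_neg]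
    have := exp_pos t
    field_simp
  simpa only [hterm, hsum] using h

lemma hasSum_mellin_inv_cosh {s : ℂ} (hs : 1 < s.re) :
    HasSum (fun k : ℕ => Complex.Gamma s * (2 * (-1) ^ k) / ((2 * k + 1 : ℝ) : ℂ) ^ s)
      (mellin (fun t => (((cosh t)⁻¹ : ℝ) : ℂ)) s) := by
  refine hasSum_mellin (fun k => Or.inr (by positivity)) (by linarith) (fun t ht => ?_) ?_
  · exact_mod_cast Complex.hasSum_ofReal.mpr (hasSum_inv_cosh ht)
  · refine .of_nonneg_of_le (fun k => by positivity) (fun k => ?_)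
      (((Real.summable_one_div_nat_add_rpow (1 / 2) s.re).mpr hs).mul_left 2)
    rw [norm_mul, norm_pow, norm_neg, norm_one, one_pow, mul_one, Complex.norm_ofNat,
      mul_one_div]
    gcongr
    rw [abs_of_pos (by positivity)]
    linarith [(k.cast_nonneg : (0 : ℝ) ≤ k)]

lemma hasSum_alternating_inv_odd_cube :
    HasSum (fun k : ℕ => (-1) ^ k / (2 * k + 1 : ℝ) ^ 3) (π ^ 3 / 32) := by
  have hodd : Function.Injective fun k : ℕ => 2 * k + 1 := fun a b h => by simpa using h
  have heven (n : ℕ) (hn : n ∉ range fun k : ℕ => 2 * k + 1) :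
      1 / (n : ℝ) ^ 3 * sin (π * n / 2) = 0 := by
    obtain ⟨m, rfl⟩ : Even n := Nat.not_odd_iff_even.mp fun ⟨k, hk⟩ => hn ⟨k, hk.symm⟩
    rw [show π * ((m + m : ℕ) : ℝ) / 2 = m * π by push_cast; ring, sin_nat_mul_pi, mul_zero]
  refine ((hodd.hasSum_iff heven).mpr hasSum_L_function_mod_four_eval_three).congr_fun
    fun k => ?_
  rw [Function.comp_apply,
    show π * ((2 * k + 1 : ℕ) : ℝ) / 2 = π / 2 + k * π by push_cast; ring,
    sin_add_nat_mul_pi, sin_pi_div_two]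
  push_cast
  ring

lemma integral_Ioi_sq_div_cosh : ∫ t in Ioi (0 : ℝ), t ^ 2 / cosh t = π ^ 3 / 8 := by
  have hmellin : mellin (fun t => (((cosh t)⁻¹ : ℝ) : ℂ)) 3
      = ((∫ t in Ioi (0 : ℝ), t ^ 2 / cosh t : ℝ) : ℂ) := by
    rw [mellin, ← integral_complex_ofReal]
    refine setIntegral_congr_fun measurableSet_Ioi fun t _ => ?_
    norm_num [div_eq_mul_inv]
  have hsum := hasSum_mellin_inv_cosh (s := 3) (by norm_num)
  rw [hmellin] at hsum
  have hbeta := Complex.hasSum_ofReal.mpr (hasSum_alternating_inv_odd_cube.mul_left 4)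
  rw [show 4 * (π ^ 3 / 32) = π ^ 3 / 8 by ring] at hbeta
  refine Complex.ofReal_injective (hsum.unique (hbeta.congr_fun fun k => ?_))
  rw [Complex.cpow_ofNat, show (3 : ℂ) = (2 : ℕ) + 1 by norm_num,
    Complex.Gamma_nat_eq_factorial]
  push_cast
  ring

lemma integral_sq_div_cosh : ∫ t : ℝ, t ^ 2 / cosh t = π ^ 3 / 4 := by
  have h := integral_comp_abs (f := fun t : ℝ => t ^ 2 / cosh t)
  simp only [sq_abs, cosh_abs] at h
  rw [h, integral_Ioi_sq_div_cosh]
  ring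

lemma add_mul_pow_three_div_cosh (x a t : ℝ) :
    (x + a * t) ^ 3 / cosh t = x ^ 3 * (t ^ 0 / cosh t) + 3 * x ^ 2 * a * (t ^ 1 / cosh t)
      + 3 * x * a ^ 2 * (t ^ 2 / cosh t) + a ^ 3 * (t ^ 3 / cosh t) := by
  ring

lemma integrable_add_mul_pow_three_div_cosh (x a : ℝ) :
    Integrable fun t => (x + a * t) ^ 3 / cosh t := by
  have hi (n : ℕ) (c : ℝ) := (integrable_pow_div_cosh n).const_mul c
  simp only [add_mul_pow_three_div_cosh]
  exact (((hi 0 _).add (hi 1 _)).add (hi 2 _)).add (hi 3 _)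

lemma integral_add_mul_pow_three_div_cosh (x a : ℝ) :
    ∫ t, (x + a * t) ^ 3 / cosh t = π * x ^ 3 + 3 * π ^ 3 / 4 * a ^ 2 * x := by
  have hi (n : ℕ) (c : ℝ) := (integrable_pow_div_cosh n).const_mul c
  simp only [add_mul_pow_three_div_cosh]
  rw [integral_add ?_ (hi 3 _), integral_add ?_ (hi 2 _), integral_add (hi 0 _) (hi 1 _)]
  rotate_left
  · exact (hi 0 _).add (hi 1 _)
  · exact ((hi 0 _).add (hi 1 _)).add (hi 2 _)
  simp only [integral_const_mul, pow_zero, integral_one_div_cosh, integral_sq_div_cosh,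
    integral_pow_div_cosh_of_odd odd_one, integral_pow_div_cosh_of_odd (by decide : Odd 3)]
  ring

lemma cosh_sub_div_comm (x u c : ℝ) : cosh ((x - u) / c) = cosh ((u - x) / c) := by
  rw [← cosh_neg, ← neg_div, neg_sub]

lemma integrable_pow_three_div_cosh_sub_div (x : ℝ) {c : ℝ} (hc : c ≠ 0) :
    Integrable fun u => u ^ 3 / cosh ((x - u) / c) := by
  have h := ((integrable_add_mul_pow_three_div_cosh x c).comp_div hc).comp_sub_right x
  refine h.congr (.of_forall fun u => ?_)
  simp only [cosh_sub_div_comm x u, mul_div_cancel₀ _ hc, add_sub_cancel]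

lemma integral_pow_three_div_cosh_sub_div (x : ℝ) {c : ℝ} (hc : 0 < c) :
    ∫ u, u ^ 3 / cosh ((x - u) / c) = c * (π * x ^ 3 + 3 * π ^ 3 / 4 * c ^ 2 * x) := by
  set h : ℝ → ℝ := fun t => (x + c * t) ^ 3 / cosh t
  calc ∫ u, u ^ 3 / cosh ((x - u) / c) = ∫ u, h ((u - x) / c) := by
        simp only [h, cosh_sub_div_comm x _ c, mul_div_cancel₀ _ hc.ne', add_sub_cancel]
    _ = ∫ v, h (v / c) := integral_sub_right_eq_self (fun v => h (v / c)) x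
    _ = c * ∫ t, h t := by rw [Measure.integral_comp_div, abs_of_pos hc, smul_eq_mul]
    _ = _ := by rw [integral_add_mul_pow_three_div_cosh]

lemma integral_Ioi_add_comp_neg {E : Type*} [NormedAddCommGroup E] [NormedSpace ℝ E]
    {g : ℝ → E} (hg : Integrable g) : ∫ u in Ioi 0, (g u + g (-u)) = ∫ u, g u := by
  rw [integral_add hg.integrableOn hg.comp_neg.integrableOn, integral_comp_neg_Ioi, neg_zero,
    add_comm, intervalIntegral.integral_Iic_add_Ioi hg.integrableOn hg.integrableOn]

lemma pow_three_mul_Hker (x u : ℝ) :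
    u ^ 3 * Hker x u
      = (4 * π)⁻¹ * (u ^ 3 / cosh ((x - u) / 4) + (-u) ^ 3 / cosh ((x - -u) / 4)) := by
  simp only [Hker, sub_neg_eq_add]
  ring

lemma integrableOn_pow_three_mul_Hker (x : ℝ) :
    IntegrableOn (fun u => u ^ 3 * Hker x u) (Ioi 0) := by
  have hg := integrable_pow_three_div_cosh_sub_div x (by norm_num : (4 : ℝ) ≠ 0)
  simp only [pow_three_mul_Hker]
  exact ((hg.add hg.comp_neg).const_mul _).integrableOn

lemma integral_Ioi_pow_three_mul_Hker (x : ℝ) :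
    ∫ u in Ioi 0, u ^ 3 * Hker x u = x ^ 3 + 12 * π ^ 2 * x := by
  simp only [pow_three_mul_Hker]
  rw [integral_const_mul, integral_Ioi_add_comp_neg (g := fun u => u ^ 3 / cosh ((x - u) / 4))
    (integrable_pow_three_div_cosh_sub_div x (by norm_num)),
    integral_pow_three_div_cosh_sub_div x (by norm_num)]
  field_simp
  ring

lemma integral_indicator_Ioo_mul_sub (g : ℝ → ℝ) (u : ℝ) :
    ∫ y, (Ioo 0 u).indicator (fun y => y * (u - y) * g u) y
      = (Ioi 0).indicator (fun u => u ^ 3 / 6 * g u) u := by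
  rw [integral_indicator measurableSet_Ioo]
  rcases le_or_gt u 0 with hu | hu
  · rw [Ioo_eq_empty hu.not_gt, Measure.restrict_empty, integral_zero_measure,
      indicator_of_notMem (notMem_Ioi.mpr hu)]
  have hpoly : (fun y => y * (u - y) * g u) = fun y => y * (u * g u) - y ^ 2 * g u := by
    ext; ring
  rw [indicator_of_mem (mem_Ioi.mpr hu), ← integral_Ioc_eq_integral_Ioo,
    ← intervalIntegral.integral_of_le hu.le, hpoly,
    intervalIntegral.integral_sub (intervalIntegral.intervalIntegrable_id.mul_const _)
      ((intervalIntegral.intervalIntegrable_pow 2).mul_const _)]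
  simp only [intervalIntegral.integral_mul_const, integral_id, integral_pow]
  ring

lemma integrable_indicator_Ioo_mul_sub (u c : ℝ) :
    Integrable fun y => (Ioo 0 u).indicator (fun y => y * (u - y) * c) y :=
  (integrable_indicator_iff measurableSet_Ioo).mpr
    ((by fun_prop : Continuous fun y : ℝ => y * (u - y) * c).integrableOn_Icc.mono_set
      Ioo_subset_Icc_self)

lemma norm_indicator_Ioo_mul_sub (u c y : ℝ) :
    ‖(Ioo 0 u).indicator (fun y => y * (u - y) * c) y‖
      = (Ioo 0 u).indicator (fun y => y * (u - y) * |c|) y := by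
  by_cases hy : y ∈ Ioo 0 u
  · rw [indicator_of_mem hy, indicator_of_mem hy, norm_mul, norm_mul, norm_of_nonneg hy.1.le,
      norm_of_nonneg (sub_nonneg.mpr hy.2.le), norm_eq_abs]
  · rw [indicator_of_notMem hy, indicator_of_notMem hy, norm_zero]

theorem integral_Ioi_Ioi_mul_mul_comp_add {f : ℝ → ℝ} (hm : Measurable f)
    (hf : IntegrableOn (fun u => u ^ 3 * f u) (Ioi 0)) :
    ∫ y in Ioi 0, ∫ z in Ioi 0, y * z * f (y + z) = ∫ u in Ioi 0, u ^ 3 / 6 * f u := by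
  set F : ℝ × ℝ → ℝ := fun p => (Ioo 0 p.2).indicator (fun y => y * (p.2 - y) * f p.2) p.1
  have hshear : MeasurePreserving (MeasurableEquiv.shearAddRight ℝ) (volume.prod volume)
      (volume.prod volume) := measurePreserving_prod_add _ _
  have hFshear : F ∘ MeasurableEquiv.shearAddRight ℝ
      = (Ioi 0 ×ˢ Ioi 0).indicator fun p => p.1 * p.2 * f (p.1 + p.2) := by
    ext ⟨y, z⟩
    change (Ioo 0 (y + z)).indicator (fun w => w * (y + z - w) * f (y + z)) y = _
    simp only [indicator_apply, mem_Ioo, mem_prod, mem_Ioi, lt_add_iff_pos_right,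
      add_sub_cancel_left]
  have hFm : Measurable F := by
    have : F = {p : ℝ × ℝ | 0 < p.1 ∧ p.1 < p.2}.indicator
        fun p => p.1 * (p.2 - p.1) * f p.2 := rfl
    rw [this]
    exact (by fun_prop : Measurable _).indicator
      ((measurableSet_lt measurable_const measurable_fst).inter
        (measurableSet_lt measurable_fst measurable_snd))
  have hFint : Integrable F (volume.prod volume) := by
    refine (integrable_prod_iff' hFm.aestronglyMeasurable).mpr
      ⟨.of_forall fun u => integrable_indicator_Ioo_mul_sub u (f u), ?_⟩
    simp only [F, norm_indicator_Ioo_mul_sub, integral_indicator_Ioo_mul_sub (fun u => |f u|)]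
    refine (integrable_indicator_iff measurableSet_Ioi).mpr
      (IntegrableOn.congr_fun (hf.norm.div_const 6) (fun u hu => ?_) measurableSet_Ioi)
    rw [norm_mul, norm_pow, norm_of_nonneg (le_of_lt hu), norm_eq_abs]
    ring
  calc ∫ y in Ioi 0, ∫ z in Ioi 0, y * z * f (y + z)
      = ∫ p in Ioi 0 ×ˢ Ioi 0, p.1 * p.2 * f (p.1 + p.2) ∂(volume.prod volume) := by
        refine (setIntegral_prod (fun p : ℝ × ℝ => p.1 * p.2 * f (p.1 + p.2)) ?_).symm
        rw [← integrable_indicator_iff (measurableSet_Ioi.prod measurableSet_Ioi), ← hFshear,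
          hshear.integrable_comp_emb (MeasurableEquiv.measurableEmbedding _)]
        exact hFint
    _ = ∫ p, F (MeasurableEquiv.shearAddRight ℝ p) ∂(volume.prod volume) := by
        rw [← integral_indicator (measurableSet_Ioi.prod measurableSet_Ioi), ← hFshear]
        rfl
    _ = ∫ u, ∫ y, F (y, u) := by
        rw [hshear.integral_comp', integral_prod_symm F hFint]
    _ = ∫ u in Ioi 0, u ^ 3 / 6 * f u := by
        simp only [F, integral_indicator_Ioo_mul_sub f, integral_indicator measurableSet_Ioi]

/-- `∫₀^∞ ∫₀^∞ y z D(x,y,z) dy dz = x³/6 + 2π² x`. -/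
theorem stmt7 (x : ℝ) :
    (∫ y in Set.Ioi (0 : ℝ), ∫ z in Set.Ioi (0 : ℝ), y * z * Dker x y z) =
      x ^ 3 / 6 + 2 * Real.pi ^ 2 * x := by
  have hm : Measurable (Hker x) := by unfold Hker; fun_prop
  calc (∫ y in Ioi 0, ∫ z in Ioi 0, y * z * Dker x y z)
      = ∫ u in Ioi 0, u ^ 3 / 6 * Hker x u :=
        integral_Ioi_Ioi_mul_mul_comp_add hm (integrableOn_pow_three_mul_Hker x)
    _ = (∫ u in Ioi 0, u ^ 3 * Hker x u) / 6 := by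
        simp only [div_mul_eq_mul_div, integral_div]
    _ = x ^ 3 / 6 + 2 * π ^ 2 * x := by
        rw [integral_Ioi_pow_three_mul_Hker]
        ring
end

section
/- The function V(L) defined by 2L·V(L) = ∫₀^∞ x H(L,2x) dx satisfies V(L) = 1/8 for all L > 0; equivalently, ∫₀^∞ x H(L, 2x) dx = L/4. -/
/-!
Put `φ y = 1 / cosh (y / 2)` and `b = L / 2`; then `x H(L, 2x) = (4π)⁻¹ x (φ (x - b) - φ (x + b))`.
Since `φ` is even, the reflection `x ↦ -x` turns `∫₀^∞ x φ (x + b)` into `-∫_{-∞}^0 x φ (x - b)`,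
so the half-line integral is `∫_ℝ x φ (x - b) = ∫_ℝ (u + b) φ u = b ∫_ℝ φ`, the odd part `u φ u`
integrating to zero. Finally `∫_ℝ φ = 2 ∫_ℝ 1 / cosh = 2π`, a primitive of `1 / cosh` being
`2 arctan ∘ exp`.
-/

open Real MeasureTheory

open Set Filter Topology

namespace Real

theorem cosh_half_sq_add_sinh_half_sq (x : ℝ) : cosh (x / 2) ^ 2 + sinh (x / 2) ^ 2 = cosh x := by
  rw [← cosh_two_mul, mul_div_cancel₀ x two_ne_zero]

theorem one_add_sq_div_two_le_cosh (x : ℝ) : 1 + x ^ 2 / 2 ≤ cosh x := by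
  have hsinh : |x / 2| ≤ |sinh (x / 2)| := by
    rw [abs_sinh]; exact self_le_sinh_iff.2 (abs_nonneg _)
  have hsq : (x / 2) ^ 2 ≤ sinh (x / 2) ^ 2 := sq_le_sq.2 hsinh
  have hcosh : cosh x = 1 + 2 * sinh (x / 2) ^ 2 := by
    rw [← cosh_half_sq_add_sinh_half_sq x, cosh_sq]; ring
  nlinarith

theorem abs_le_cosh (x : ℝ) : |x| ≤ cosh x := by
  nlinarith [one_add_sq_div_two_le_cosh x, sq_abs x, sq_nonneg (|x| - 1)]

theorem abs_mul_inv_cosh_le (x : ℝ) : |x| * (cosh x)⁻¹ ≤ 2 * (cosh (x / 2))⁻¹ := by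
  have hc : 0 < cosh (x / 2) := cosh_pos _
  have hx : |x| ≤ 2 * cosh (x / 2) := by
    have := abs_le_cosh (x / 2); rw [abs_div, abs_two] at this; linarith
  have hsq : cosh (x / 2) ^ 2 ≤ cosh x := by
    rw [← cosh_half_sq_add_sinh_half_sq x]; nlinarith [sq_nonneg (sinh (x / 2))]
  rw [← div_eq_mul_inv, div_le_iff₀ (cosh_pos x)]
  calc |x| ≤ 2 * cosh (x / 2) := hx
    _ = 2 * (cosh (x / 2))⁻¹ * cosh (x / 2) ^ 2 := by field_simp
    _ ≤ 2 * (cosh (x / 2))⁻¹ * cosh x := by gcongr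

theorem integrable_inv_cosh : Integrable fun x : ℝ ↦ (cosh x)⁻¹ := by
  refine (integrable_inv_one_add_sq.const_mul 2).mono'
    (continuous_cosh.inv₀ fun x ↦ (cosh_pos x).ne').aestronglyMeasurable
    (Eventually.of_forall fun x ↦ ?_)
  rw [norm_inv, norm_of_nonneg (cosh_pos x).le]
  calc (cosh x)⁻¹ ≤ (1 + x ^ 2 / 2)⁻¹ := inv_anti₀ (by positivity) (one_add_sq_div_two_le_cosh x)
    _ ≤ 2 * (1 + x ^ 2)⁻¹ := by
      rw [← div_eq_mul_inv, inv_eq_one_div, div_le_div_iff₀ (by positivity) (by positivity)]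
      nlinarith [sq_nonneg x]

theorem integrable_mul_inv_cosh : Integrable fun x : ℝ ↦ x * (cosh x)⁻¹ := by
  refine ((integrable_inv_cosh.comp_div two_ne_zero).const_mul 2).mono'
    (continuous_id.mul (continuous_cosh.inv₀ fun x ↦ (cosh_pos x).ne')).aestronglyMeasurable
    (Eventually.of_forall fun x ↦ ?_)
  rw [norm_mul, norm_inv, norm_of_nonneg (cosh_pos x).le, norm_eq_abs]
  exact abs_mul_inv_cosh_le x

theorem hasDerivAt_two_mul_arctan_exp (x : ℝ) :
    HasDerivAt (fun x ↦ 2 * arctan (exp x)) (cosh x)⁻¹ x := by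
  refine (((hasDerivAt_arctan (exp x)).comp x (hasDerivAt_exp x)).const_mul 2).congr_deriv ?_
  rw [cosh_eq, exp_neg]
  field_simp
  ring

theorem integral_inv_cosh : ∫ x : ℝ, (cosh x)⁻¹ = π := by
  have hbot : Tendsto (fun x ↦ 2 * arctan (exp x)) atBot (𝓝 0) := by
    simpa using ((continuous_arctan.tendsto 0).comp tendsto_exp_atBot).const_mul 2
  have htop : Tendsto (fun x ↦ 2 * arctan (exp x)) atTop (𝓝 π) := by
    simpa [mul_div_cancel₀] using
      ((tendsto_nhds_of_tendsto_nhdsWithin tendsto_arctan_atTop).comp tendsto_exp_atTop).const_mul 2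
  rw [integral_of_hasDerivAt_of_tendsto hasDerivAt_two_mul_arctan_exp integrable_inv_cosh hbot htop,
    sub_zero]

end Real

theorem integral_mul_eq_zero_of_even {φ : ℝ → ℝ} (hφ : φ.Even) : ∫ x, x * φ x = 0 := by
  have h := integral_neg_eq_self (fun x ↦ x * φ x) volume
  simp only [hφ _, neg_mul, integral_neg] at h
  linarith

theorem integral_Ioi_mul_sub_of_even {φ : ℝ → ℝ} (hφ : φ.Even) (hint : Integrable φ)
    (hint_mul : Integrable fun x ↦ x * φ x) (b : ℝ) :
    ∫ x in Ioi (0 : ℝ), x * (φ (x - b) - φ (x + b)) = b * ∫ x, φ x := by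
  set f : ℝ → ℝ := fun x ↦ x * φ (x - b)
  have hf : Integrable f := by
    have := (hint_mul.add (hint.const_mul b)).comp_sub_right b
    refine this.congr (Eventually.of_forall fun x ↦ ?_)
    simp only [Pi.add_apply, f]; ring
  have hreflect : ∀ x, x * φ (x + b) = -f (-x) := fun x ↦ by
    simp only [f, ← hφ (x + b)]; ring_nf
  have hshift : ∫ x, f x = ∫ u, (u + b) * φ u := by
    rw [← integral_sub_right_eq_self (μ := volume) (fun u ↦ (u + b) * φ u) b]
    simp only [f, sub_add_cancel]
  calc ∫ x in Ioi (0 : ℝ), x * (φ (x - b) - φ (x + b))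
      = (∫ x in Ioi (0 : ℝ), f x) - ∫ x in Ioi (0 : ℝ), -f (-x) := by
        simp only [mul_sub, hreflect]
        exact integral_sub (g := fun x ↦ -f (-x)) hf.integrableOn hf.comp_neg.neg.integrableOn
    _ = (∫ x in Iic (0 : ℝ), f x) + ∫ x in Ioi (0 : ℝ), f x := by
        rw [integral_comp_neg_Ioi 0 (fun y ↦ -f y), neg_zero, integral_neg, sub_neg_eq_add,
          add_comm]
    _ = ∫ x, f x := intervalIntegral.integral_Iic_add_Ioi hf.integrableOn hf.integrableOn
    _ = b * ∫ x, φ x := by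
        rw [hshift]
        simp only [add_mul]
        rw [integral_add hint_mul (hint.const_mul b), integral_mul_eq_zero_of_even hφ, integral_const_mul,
          zero_add]

theorem integral_Ioi_mul_inv_cosh_half_sub (b : ℝ) :
    ∫ x in Ioi (0 : ℝ), x * ((cosh ((x - b) / 2))⁻¹ - (cosh ((x + b) / 2))⁻¹) = 2 * π * b := by
  have hφ : Function.Even fun y : ℝ ↦ (cosh (y / 2))⁻¹ := fun y ↦ by
    simp only [neg_div, cosh_neg]
  have hint : Integrable fun y : ℝ ↦ (cosh (y / 2))⁻¹ :=
    integrable_inv_cosh.comp_div two_ne_zero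
  have hint_mul : Integrable fun y : ℝ ↦ y * (cosh (y / 2))⁻¹ := by
    refine ((integrable_mul_inv_cosh.comp_div two_ne_zero).const_mul 2).congr
      (Eventually.of_forall fun y ↦ ?_)
    simp only; ring
  have hmass : ∫ y, (cosh (y / 2))⁻¹ = 2 * π := by
    rw [Measure.integral_comp_div (fun y ↦ (cosh y)⁻¹), integral_inv_cosh, abs_two, smul_eq_mul]
  rw [integral_Ioi_mul_sub_of_even hφ hint hint_mul, hmass, mul_comm]

/-- For every `L > 0`, `∫₀^∞ x H(L, 2x) dx = L/4`; equivalently, the function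
`V(L)` defined by `2L·V(L) = ∫₀^∞ x H(L,2x) dx` satisfies `V(L) = 1/8`. -/
theorem stmt9 (L : ℝ) (hL : 0 < L) :
    (∫ x in Set.Ioi (0 : ℝ), x * Hker L (2 * x)) = L / 4 ∧
    (∫ x in Set.Ioi (0 : ℝ), x * Hker L (2 * x)) / (2 * L) = 1 / 8 := by
  have hmain : ∫ x in Ioi (0 : ℝ), x * Hker L (2 * x) = L / 4 := by
    calc ∫ x in Ioi (0 : ℝ), x * Hker L (2 * x)
        = (4 * π)⁻¹ * ∫ x in Ioi (0 : ℝ),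
            x * ((cosh ((x - L / 2) / 2))⁻¹ - (cosh ((x + L / 2) / 2))⁻¹) := by
          rw [← integral_const_mul]
          refine setIntegral_congr_fun measurableSet_Ioi fun x _ ↦ ?_
          rw [Hker, show (L - 2 * x) / 4 = -((x - L / 2) / 2) by ring,
            show (L + 2 * x) / 4 = (x + L / 2) / 2 by ring, cosh_neg]
          ring
      _ = L / 4 := by
          rw [integral_Ioi_mul_inv_cosh_half_sub]
          field_simp
  refine ⟨hmain, ?_⟩
  rw [hmain]
  field_simp
  ring
end

section
/- A symmetric polynomial f(x₁,...,xₙ) in n variables of total degree strictly less than n is uniquely determined by the evaluation of one variable at any fixed a: if f and g are symmetric of degree < n and f(x₁,...,x_{n−1},a) = g(x₁,...,x_{n−1},a) for all x₁,...,x_{n−1}, then f = g. -/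
/-!
The difference `f - g` is symmetric and vanishes on the hyperplane `x_last = a`, hence on every
hyperplane `x_i = a`. It is therefore divisible by each `X_i - a`; these are pairwise
non-associated irreducibles, so `f - g` is divisible by their product, whose degree `n` exceeds
that of `f - g`. Thus `f - g = 0`.
-/

open MvPolynomial

namespace MvPolynomial

variable {σ R : Type*} [CommRing R]

theorem totalDegree_X_sub_C [Nontrivial R] (i : σ) (a : R) : (X i - C a).totalDegree = 1 := by
  obtain ⟨_, _⟩ := exists_wellFoundedGT σ
  rw [← degree_degLexDegree, MonomialOrder.degree_X_sub_C, Finsupp.degree_single]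

theorem X_sub_C_ne_zero [Nontrivial R] (i : σ) (a : R) : (X i - C a : MvPolynomial σ R) ≠ 0 :=
  fun h ↦ by simpa [h] using totalDegree_X_sub_C i a

theorem totalDegree_prod_X_sub_C [IsDomain R] [Fintype σ] (a : R) :
    (∏ i, (X i - C a : MvPolynomial σ R)).totalDegree = Fintype.card σ := by
  obtain ⟨_, _⟩ := exists_wellFoundedGT σ
  rw [← degree_degLexDegree, MonomialOrder.degree_prod fun i _ ↦ X_sub_C_ne_zero i a]
  simp [MonomialOrder.degree_X_sub_C]

theorem irreducible_X_sub_C [IsDomain R] (i : σ) (a : R) : Irreducible (X i - C a) := by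
  classical
  refine irreducible_of_totalDegree_eq_one (totalDegree_X_sub_C i a) fun x hx ↦
    isUnit_of_dvd_one ?_
  simpa [coeff_C, Ne.symm (Finsupp.single_ne_zero.mpr one_ne_zero)] using hx (Finsupp.single i 1)

theorem isRelPrime_X_sub_C [IsDomain R] {i j : σ} (hij : i ≠ j) (a b : R) :
    IsRelPrime (X i - C a) (X j - C b) := by
  classical
  refine (irreducible_X_sub_C i a).isRelPrime_iff_not_dvd.mpr fun hdvd ↦ ?_
  have := map_dvd (eval (Function.update (fun _ ↦ a) j (b + 1))) hdvd
  simp [hij] at this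

theorem X_sub_C_dvd_of_eval_eq_zero [IsDomain R] [Infinite R] {p : MvPolynomial σ R} {i : σ}
    {a : R} (h : ∀ x : σ → R, x i = a → eval x p = 0) : X i - C a ∣ p := by
  classical
  -- Modulo `X i - C a`, `p` is congruent to its substitution `X i ↦ C a`, which vanishes
  -- identically because it vanishes at every point of the infinite domain `R`.
  set I := Ideal.span {(X i - C a : MvPolynomial σ R)}
  have hsubst : bind₁ (Function.update X i (C a)) p = 0 := by
    refine MvPolynomial.funext fun x ↦ ?_
    have hpt : (fun j ↦ eval x (Function.update X i (C a) j)) = Function.update x i a := by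
      funext j
      rcases eq_or_ne j i with rfl | hj <;> simp_all
    rw [map_zero, ← h _ (Function.update_self i a x), ← hpt]
    exact eval₂Hom_bind₁ _ _ _ _
  have hquot : (Ideal.Quotient.mkₐ R I).comp (bind₁ (Function.update X i (C a))) =
      Ideal.Quotient.mkₐ R I := by
    refine algHom_ext fun j ↦ ?_
    rcases eq_or_ne j i with rfl | hj
    · simpa [Ideal.Quotient.eq, Ideal.mem_span_singleton, I] using dvd_sub_comm.mp dvd_rfl
    · simp [hj]
  rw [← Ideal.mem_span_singleton, ← Ideal.Quotient.eq_zero_iff_mem]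
  simpa [hsubst] using (DFunLike.congr_fun hquot p).symm

theorem prod_X_sub_C_dvd [IsDomain R] [UniqueFactorizationMonoid R] [Fintype σ]
    {p : MvPolynomial σ R} {a : R} (h : ∀ i, X i - C a ∣ p) : ∏ i, (X i - C a) ∣ p :=
  Fintype.prod_dvd_of_isRelPrime (fun _ _ hij ↦ isRelPrime_X_sub_C hij a a) h

theorem IsSymmetric.eval_eq_zero_of_apply_eq {p : MvPolynomial σ R} (hp : p.IsSymmetric)
    {k : σ} {a : R} (h : ∀ x : σ → R, x k = a → eval x p = 0) (i : σ) {x : σ → R}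
    (hx : x i = a) : eval x p = 0 := by
  classical
  rw [← hp (Equiv.swap i k), eval_rename]
  exact h _ (by simpa using hx)

theorem IsSymmetric.eq_zero_of_totalDegree_lt_of_eval_eq_zero [IsDomain R]
    [UniqueFactorizationMonoid R] [Infinite R] [Fintype σ] {p : MvPolynomial σ R}
    (hp : p.IsSymmetric) (hdeg : p.totalDegree < Fintype.card σ) {k : σ} {a : R}
    (h : ∀ x : σ → R, x k = a → eval x p = 0) : p = 0 := by
  by_contra hp0
  have hdvd := prod_X_sub_C_dvd (a := a) fun i ↦
    X_sub_C_dvd_of_eval_eq_zero fun _ hx ↦ hp.eval_eq_zero_of_apply_eq h i hx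
  exact hdeg.not_ge
    (totalDegree_prod_X_sub_C (σ := σ) a ▸ totalDegree_le_of_dvd_of_isDomain hdvd hp0)

end MvPolynomial

/-- A symmetric polynomial in `n` variables of total degree `< n` is uniquely
determined by fixing one variable at any value `a`: if `f, g` are symmetric of
total degree `< n` and agree whenever the last variable equals `a`, then `f = g`. -/
theorem stmt12 (m : ℕ) (f g : MvPolynomial (Fin (m + 1)) ℂ)
    (hf : f.IsSymmetric) (hg : g.IsSymmetric)
    (hdf : f.totalDegree < m + 1) (hdg : g.totalDegree < m + 1) (a : ℂ)
    (h : ∀ x : Fin (m + 1) → ℂ, x (Fin.last m) = a →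
      MvPolynomial.eval x f = MvPolynomial.eval x g) :
    f = g := by
  rw [← sub_eq_zero]
  have hdeg : (f - g).totalDegree < Fintype.card (Fin (m + 1)) :=
    calc (f - g).totalDegree ≤ max f.totalDegree g.totalDegree := totalDegree_sub f g
      _ < Fintype.card (Fin (m + 1)) := by simpa using max_lt hdf hdg
  refine (hf.sub hg).eq_zero_of_totalDegree_lt_of_eval_eq_zero hdeg (k := Fin.last m) (a := a)
    fun x hx ↦ ?_
  rw [map_sub, h x hx, sub_self]
end
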